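/- arXiv:1809.00162 — 3 statements merged into one kernel-verified Lean document; each statement's English description precedes it below -/
import Mathlib

section
/- For a hypergraph H with no repeated hyperedge and range k_max, with layered e-adjacency tensor A_H of order k_max and dimension n + k_max - 1, for every j with 2 ≤ j ≤ k_max, the number of hyperedges of cardinality j equals d_{n+j} - d_{n+j-1}, where d_{n+i} denotes the degree of the special vertex y_i (with the convention d_{n+k_max} = |E|); moreover the number of hyperedges of cardinality 1 equals d_{n+1}. -/
open Finset

theorem card_filter_le_succ {β : Type*} (s : Finset β) (f : β → ℕ) (j : ℕ) :
    #{x ∈ s | f x ≤ j + 1} = #{x ∈ s | f x ≤ j} + #{x ∈ s | f x = j + 1} := by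
  rw [← card_filter_add_card_filter_not (s := {x ∈ s | f x ≤ j + 1}) (fun x => f x ≤ j),
    filter_filter, filter_filter]
  congr 2 <;> ext x <;> simp only [mem_filter, and_congr_right_iff] <;> omega

theorem edge_counts_from_special_degrees_general {α : Type*}
    (E : Finset (Finset α))
    (kmax : ℕ) (hkmax : 2 ≤ kmax)
    (hne : ∀ e ∈ E, 1 ≤ e.card) (hrange : ∀ e ∈ E, e.card ≤ kmax)
    (d : ℕ → ℕ)
    (hd : ∀ i, 1 ≤ i → i ≤ kmax - 1 → d i = (E.filter (fun e => e.card ≤ i)).card)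
    (hdtop : d kmax = E.card) :
    (∀ j, 2 ≤ j → j ≤ kmax →
      (E.filter (fun e => e.card = j)).card = d j - d (j - 1)) ∧
    (E.filter (fun e => e.card = 1)).card = d 1 := by
  have hdeg : ∀ i, 1 ≤ i → i ≤ kmax → d i = #{e ∈ E | e.card ≤ i} := by
    intro i hi hik
    rcases hik.eq_or_lt with rfl | hlt
    · rw [hdtop, filter_true_of_mem hrange]
    · exact hd i hi (by omega)
  have hno_empty : #{e ∈ E | e.card ≤ 0} = 0 := by
    rw [card_eq_zero, filter_eq_empty_iff]
    exact fun e he => by have := hne e he; omega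
  refine ⟨fun j hj hjk => ?_, ?_⟩
  · obtain ⟨i, rfl⟩ : ∃ i, j = i + 1 := ⟨j - 1, by omega⟩
    rw [hdeg (i + 1) (by omega) hjk, Nat.add_sub_cancel, hdeg i (by omega) (by omega),
      card_filter_le_succ]
    omega
  · rw [hdeg 1 le_rfl (by omega), card_filter_le_succ E card 0, hno_empty, zero_add]

/-- With `d_{n+i} = deg(y_i) = |{e ∈ E : |e| ≤ i}|` the degrees of the special
vertices (and the convention `d_{n+k_max} = |E|`), the number of hyperedges of
cardinality `j` (for `2 ≤ j ≤ k_max`) equals `d_{n+j} - d_{n+j-1}`, and the number of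
hyperedges of cardinality `1` equals `d_{n+1}`. -/
theorem edge_counts_from_special_degrees {α : Type*} [DecidableEq α] (V : Finset α)
    (E : Finset (Finset α)) (hV : ∀ e ∈ E, e ⊆ V)
    (kmax : ℕ) (hkmax : 2 ≤ kmax)
    (hne : ∀ e ∈ E, 1 ≤ e.card) (hrange : ∀ e ∈ E, e.card ≤ kmax)
    (d : ℕ → ℕ)
    (hd : ∀ i, 1 ≤ i → i ≤ kmax - 1 → d i = (E.filter (fun e => e.card ≤ i)).card)
    (hdtop : d kmax = E.card) :
    (∀ j, 2 ≤ j → j ≤ kmax →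
      (E.filter (fun e => e.card = j)).card = d j - d (j - 1)) ∧
    (E.filter (fun e => e.card = 1)).card = d 1 :=
  edge_counts_from_special_degrees_general E kmax hkmax hne hrange d hd hdtop
end

section
/- For the layered e-adjacency tensor A_H = (a_{i1...i_{k_max}}) of a hypergraph H with no repeated hyperedge, for every index i in 1, ..., n + k_max - 1, the sum of a_{i i2 ... i_{k_max}} over all (i2, ..., i_{k_max}) with pairwise distinct indices equals d_i, where d_i = deg(v_i) for i ≤ n and d_{n+i} = deg(y_i) for 1 ≤ i ≤ k_max - 1 (degrees taken in the V_s-layered uniform hypergraph). -/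
/-!
Every hyperedge of the layered hypergraph has exactly `m + 1` vertices, so a tuple
`(v, g₂, …, g_{m+1})` of pairwise distinct vertices with image a hyperedge `ê ∋ v` is the
same as an enumeration `g` of `ê \ {v}` by `Fin m`. Each hyperedge through `v` thus carries
`m!` such tuples, each of weight `1 / m!`, and the row sum counts the hyperedges through `v`.
-/

open Finset Function
open scoped Nat

section Enumerations

variable {X : Type*} [DecidableEq X]

lemma image_fin_cons_univ {m : ℕ} (v : X) (g : Fin m → X) :
    image (Fin.cons v g : Fin (m + 1) → X) univ = insert v (image g univ) := by
  rw [← coe_inj]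
  simp [Fin.range_cons]

lemma card_filter_injective_image_eq [Fintype X] {m : ℕ} {s : Finset X} (hs : #s = m) :
    #{g : Fin m → X | Injective g ∧ image g univ = s} = m ! := by
  have enumerations_equiv_embeddings :
      {g : Fin m → X // Injective g ∧ image g univ = s} ≃ (Fin m ↪ s) :=
    { toFun g := ⟨fun j =>
          ⟨g.1 j, (congrArg (g.1 j ∈ ·) g.2.2).mp (mem_image_of_mem g.1 (mem_univ j))⟩,
        fun j k h => g.2.1 (Subtype.ext_iff.mp h)⟩
      invFun f := ⟨fun j => f j, fun j k h => f.injective (Subtype.ext h),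
        eq_of_subset_of_card_le (image_subset_iff.mpr fun j _ => (f j).2) (by
          rw [hs, card_image_of_injective _ fun j k h => f.injective (Subtype.ext h),
            card_univ, Fintype.card_fin])⟩
      left_inv _ := rfl
      right_inv _ := rfl }
  rw [← Fintype.card_subtype, Fintype.card_congr enumerations_equiv_embeddings,
    Fintype.card_embedding_eq, Fintype.card_coe, hs, Fintype.card_fin, Nat.descFactorial_self]

lemma injective_fin_cons_and_image_eq_iff {m : ℕ} {v : X} {e : Finset X} (hv : v ∈ e)
    (g : Fin m → X) :
    (Injective (Fin.cons v g : Fin (m + 1) → X) ∧ image (Fin.cons v g) univ = e) ↔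
      (Injective g ∧ image g univ = e.erase v) := by
  have hrange : v ∉ Set.range g ↔ v ∉ image g univ := by simp
  rw [Fin.cons_injective_iff, image_fin_cons_univ, hrange]
  constructor
  · rintro ⟨⟨hvg, hg⟩, rfl⟩
    exact ⟨hg, (erase_insert hvg).symm⟩
  · rintro ⟨hg, himage⟩
    rw [himage]
    exact ⟨⟨notMem_erase v e, hg⟩, insert_erase hv⟩

lemma card_filter_fin_cons_injective_image_mem [Fintype X] {m : ℕ} {F : Finset (Finset X)}
    (hF : ∀ e ∈ F, #e = m + 1) (v : X) :
    #{g : Fin m → X | Injective (Fin.cons v g : Fin (m + 1) → X) ∧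
        image (Fin.cons v g) univ ∈ F} = #{e ∈ F | v ∈ e} * m ! := by
  rw [card_eq_sum_card_fiberwise (f := fun g => image (Fin.cons v g : Fin (m + 1) → X) univ)
      (t := {e ∈ F | v ∈ e}) (fun g hg => by
        simp only [coe_filter, mem_univ, true_and, Set.mem_ofPred_eq] at hg ⊢
        exact ⟨hg.2, by rw [image_fin_cons_univ]; exact mem_insert_self v _⟩)]
  refine sum_const_nat fun e he => ?_
  obtain ⟨heF, hve⟩ := mem_filter.mp he
  rw [filter_filter, ← card_filter_injective_image_eq (X := X) (s := e.erase v)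
    (by rw [card_erase_of_mem hve, hF e heF]; rfl)]
  congr 1
  refine filter_congr fun g _ => ?_
  rw [← injective_fin_cons_and_image_eq_iff hve g]
  constructor
  · rintro ⟨⟨hg, -⟩, himage⟩
    exact ⟨hg, himage⟩
  · rintro ⟨hg, himage⟩
    exact ⟨⟨hg, himage ▸ heF⟩, himage⟩

end Enumerations

lemma card_filter_fin_le_val_add_one (m c : ℕ) (hc : 1 ≤ c) :
    #{i : Fin m | c ≤ i.1 + 1} = m + 1 - c := by
  have hsplit :=
    card_filter_add_card_filter_not (s := (univ : Finset (Fin m))) (fun i => i.1 < c - 1)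
  simp only [Fin.card_filter_val_lt, card_univ, Fintype.card_fin, not_lt] at hsplit
  have hfilter : univ.filter (fun i : Fin m => c ≤ i.1 + 1) =
      univ.filter (fun i : Fin m => c - 1 ≤ i.1) :=
    filter_congr fun i _ => by omega
  rw [hfilter]
  omega

/-- The hyperedge `ê = e ∪ {y_{|e|}, …, y_m}` of the layered uniform hypergraph, where
`Sum.inr i` stands for `y_{i+1}`. -/
def layeredEdge {n : ℕ} (m : ℕ) (e : Finset (Fin n)) : Finset (Fin n ⊕ Fin m) :=
  e.image Sum.inl ∪ (univ.filter (fun i : Fin m => #e ≤ i.1 + 1)).image Sum.inr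

lemma card_layeredEdge {n m : ℕ} {e : Finset (Fin n)} (hne : 1 ≤ #e) (hrange : #e ≤ m + 1) :
    #(layeredEdge m e) = m + 1 := by
  rw [layeredEdge, card_union_of_disjoint (by simp [disjoint_left]),
    card_image_of_injective _ Sum.inl_injective, card_image_of_injective _ Sum.inr_injective,
    card_filter_fin_le_val_add_one m _ hne]
  omega

/-- Row sums of the layered e-adjacency tensor are the degrees: for a hypergraph `H` on
`Fin n` with no repeated hyperedge and range `k_max = m + 1`, whose uniformisation `Ê`
(on the `n + m` vertices `Fin n ⊕ Fin m`, with `Sum.inr i` playing the role of the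
special vertex `y_{i+1}`) consists of the hyperedges `ê = e ∪ {y_{|e|}, ..., y_m}`, the
layered e-adjacency tensor `a` (of order `m + 1`, entries `1/m!` at injective tuples
whose image is a hyperedge of `Ê`, `0` otherwise) satisfies: for every vertex `v`, the
sum of `a` over tuples with first index `v` equals the degree of `v` in the
uniformised hypergraph. -/
theorem layered_tensor_rowsum (n m : ℕ) (E : Finset (Finset (Fin n)))
    (hne : ∀ e ∈ E, 1 ≤ e.card) (hrange : ∀ e ∈ E, e.card ≤ m + 1)
    (Ehat : Finset (Finset (Fin n ⊕ Fin m)))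
    (hEhat : Ehat = E.image (fun e =>
      e.image Sum.inl ∪
        (Finset.univ.filter (fun i : Fin m => e.card ≤ i.1 + 1)).image Sum.inr))
    (a : (Fin (m + 1) → Fin n ⊕ Fin m) → ℝ)
    (ha : ∀ i, a i =
      if Function.Injective i ∧ Finset.image i Finset.univ ∈ Ehat
      then 1 / (Nat.factorial m : ℝ) else 0) :
    ∀ v : Fin n ⊕ Fin m, ∑ g : Fin m → Fin n ⊕ Fin m, a (Fin.cons v g) =
      ((Ehat.filter (fun e => v ∈ e)).card : ℝ) := by
  intro v
  have huniform : ∀ e ∈ Ehat, #e = m + 1 := by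
    simp only [hEhat, mem_image, forall_exists_index, and_imp, forall_apply_eq_imp_iff₂]
    intro e he
    exact card_layeredEdge (hne e he) (hrange e he)
  simp only [ha, ← sum_filter, sum_const, nsmul_eq_mul,
    card_filter_fin_cons_injective_image_mem huniform v]
  push_cast
  field_simp [Nat.factorial_ne_zero m]
end

section
/- Every eigenvalue λ of the layered e-adjacency tensor A_H of a hypergraph H with no repeated hyperedge satisfies |λ| ≤ max(Δ, Δ*), where Δ is the maximum degree over the original vertices v_1, ..., v_n and Δ* is the maximum degree over the special vertices y_1, ..., y_{k_max - 1} in the uniformised hypergraph. -/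
/-!
If `x` is an eigenvector and `v` a coordinate where `|x v|` is maximal, the eigen-equation at `v`
gives `|λ| |x v|^m ≤ (∑ₘ a_{v i₂ … iₘ₊₁}) |x v|^m`, so `|λ|` is at most the `v`-th row sum of the
nonnegative tensor. For the layered tensor this row sum is at most the degree of `v` in the
uniformised hypergraph: each hyperedge through `v` is enumerated, with `v` in first position, by
at most `m!` injective index tuples. The degree of an original vertex in the uniformised hypergraph
is at most its degree in `H`, and that of a special vertex is at most `Δ*`.
-/

open Finset

def injectiveMapsIntoEquivEmbedding {α β : Type*} (s : Finset β) :
    {g : α → β // Function.Injective g ∧ ∀ j, g j ∈ s} ≃ (α ↪ s) where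
  toFun g := ⟨fun j => ⟨g.1 j, g.2.2 j⟩, fun _ _ h => g.2.1 (congrArg Subtype.val h)⟩
  invFun φ := ⟨fun j => φ j, fun _ _ h => φ.injective (Subtype.ext h), fun j => (φ j).2⟩

theorem card_filter_injective_forall_mem {k : ℕ} {β : Type*} [Fintype β] [DecidableEq β]
    (s : Finset β) :
    #{g : Fin k → β | Function.Injective g ∧ ∀ j, g j ∈ s} = (#s).descFactorial k := by
  rw [← Fintype.card_subtype, Fintype.card_congr (injectiveMapsIntoEquivEmbedding s),
    Fintype.card_embedding_eq, Fintype.card_coe, Fintype.card_fin]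

theorem card_filter_mem_image_le {α β : Type*} [DecidableEq β] {E : Finset α}
    {φ : α → β} {p : β → Prop} {q : α → Prop} [DecidablePred p] [DecidablePred q]
    (hpq : ∀ e, p (φ e) → q e) : #{e' ∈ E.image φ | p e'} ≤ #{e ∈ E | q e} := by
  rw [filter_image]
  exact card_image_le.trans (card_le_card (monotone_filter_right E fun e _ => hpq e))

theorem norm_le_of_eigen_of_sum_cons_le {ι : Type*} [Fintype ι] {m : ℕ}
    {a : (Fin (m + 1) → ι) → ℝ} (ha : ∀ i, 0 ≤ a i) {C : ℝ}
    (hrow : ∀ v, ∑ g : Fin m → ι, a (Fin.cons v g) ≤ C) {lam : ℂ} {x : ι → ℂ} (hx : x ≠ 0)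
    (heig : ∀ v, ∑ g : Fin m → ι, (a (Fin.cons v g) : ℂ) * ∏ j, x (g j) = lam * x v ^ m) :
    ‖lam‖ ≤ C := by
  obtain ⟨w, hw⟩ := Function.ne_iff.mp hx
  have : Nonempty ι := ⟨w⟩
  obtain ⟨v, hv⟩ := Finite.exists_max fun u => ‖x u‖
  have hpos : 0 < ‖x v‖ ^ m := pow_pos ((norm_pos_iff.mpr hw).trans_le (hv w)) m
  refine le_of_mul_le_mul_right ?_ hpos
  calc ‖lam‖ * ‖x v‖ ^ m = ‖∑ g : Fin m → ι, (a (Fin.cons v g) : ℂ) * ∏ j, x (g j)‖ := by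
        rw [heig, norm_mul, norm_pow]
    _ ≤ ∑ g : Fin m → ι, a (Fin.cons v g) * ‖x v‖ ^ m := by
        refine (norm_sum_le _ _).trans (sum_le_sum fun g _ => ?_)
        rw [norm_mul, Complex.norm_real, Real.norm_of_nonneg (ha _), norm_prod]
        gcongr
        · exact ha _
        · calc ∏ j, ‖x (g j)‖ ≤ ∏ _j : Fin m, ‖x v‖ :=
                prod_le_prod (fun _ _ => norm_nonneg _) fun j _ => hv (g j)
            _ = ‖x v‖ ^ m := by rw [prod_const, card_univ, Fintype.card_fin]
    _ ≤ C * ‖x v‖ ^ m := by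
        rw [← sum_mul]
        exact mul_le_mul_of_nonneg_right (hrow v) hpos.le

/-- The layered e-adjacency tensor (with `m = k_max - 1`) of the uniformised hypergraph `F`. -/
noncomputable def layeredTensor {ι : Type*} [DecidableEq ι] (F : Finset (Finset ι)) (m : ℕ)
    (i : Fin (m + 1) → ι) : ℝ :=
  if Function.Injective i ∧ univ.image i ∈ F then 1 / (m.factorial : ℝ) else 0

theorem layeredTensor_nonneg {ι : Type*} [DecidableEq ι] (F : Finset (Finset ι)) (m : ℕ)
    (i : Fin (m + 1) → ι) : 0 ≤ layeredTensor F m i := by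
  unfold layeredTensor
  split_ifs <;> positivity

section ConsEnumeration

variable {ι : Type*} [Fintype ι] [DecidableEq ι] {m : ℕ}

theorem card_filter_cons_injective_image_eq_le (v : ι) (e : Finset ι) :
    #{g : Fin m → ι | Function.Injective (Fin.cons v g : Fin (m + 1) → ι) ∧
        univ.image (Fin.cons v g : Fin (m + 1) → ι) = e} ≤ m.factorial := by
  set S := ({g : Fin m → ι | Function.Injective (Fin.cons v g : Fin (m + 1) → ι) ∧
        univ.image (Fin.cons v g : Fin (m + 1) → ι) = e} : Finset _)
  obtain hS | ⟨g₀, hg₀⟩ := S.eq_empty_or_nonempty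
  · simp [hS]
  have hv : v ∈ e := by
    rw [← (mem_filter.mp hg₀).2.2]
    exact mem_image.mpr ⟨0, mem_univ _, Fin.cons_zero _ _⟩
  have hcard : #(e.erase v) = m := by
    rw [card_erase_of_mem hv, ← (mem_filter.mp hg₀).2.2,
      card_image_of_injective _ (mem_filter.mp hg₀).2.1, card_univ, Fintype.card_fin,
      Nat.add_sub_cancel]
  have hsub : S ⊆ ({g : Fin m → ι | Function.Injective g ∧ ∀ j, g j ∈ e.erase v} : Finset _) := by
    intro g hg
    obtain ⟨-, hinj, himage⟩ := mem_filter.mp hg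
    obtain ⟨hvg, hginj⟩ := Fin.cons_injective_iff.mp hinj
    refine mem_filter.mpr ⟨mem_univ _, hginj, fun j => mem_erase.mpr ⟨?_, ?_⟩⟩
    · exact fun h => hvg ⟨j, h⟩
    · rw [← himage]
      exact mem_image.mpr ⟨j.succ, mem_univ _, Fin.cons_succ _ _ _⟩
  calc #S ≤ _ := card_le_card hsub
    _ = m.factorial := by
      rw [card_filter_injective_forall_mem, hcard, Nat.descFactorial_self]

theorem card_filter_cons_injective_image_mem_le (F : Finset (Finset ι)) (v : ι) :
    #{g : Fin m → ι | Function.Injective (Fin.cons v g : Fin (m + 1) → ι) ∧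
        univ.image (Fin.cons v g : Fin (m + 1) → ι) ∈ F} ≤ #{e ∈ F | v ∈ e} * m.factorial := by
  calc _ ≤ #({e ∈ F | v ∈ e}.biUnion fun e =>
          {g : Fin m → ι | Function.Injective (Fin.cons v g : Fin (m + 1) → ι) ∧
            univ.image (Fin.cons v g : Fin (m + 1) → ι) = e}) := by
        refine card_le_card fun g hg => ?_
        obtain ⟨-, hinj, hF⟩ := mem_filter.mp hg
        refine mem_biUnion.mpr ⟨_, mem_filter.mpr ⟨hF, ?_⟩, mem_filter.mpr ⟨mem_univ _, hinj, rfl⟩⟩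
        exact mem_image.mpr ⟨0, mem_univ _, Fin.cons_zero _ _⟩
    _ ≤ _ := card_biUnion_le_card_mul _ _ _ fun e _ => card_filter_cons_injective_image_eq_le v e

theorem sum_layeredTensor_cons_le_card_filter_mem (F : Finset (Finset ι)) (v : ι) :
    ∑ g : Fin m → ι, layeredTensor F m (Fin.cons v g) ≤ #{e ∈ F | v ∈ e} := by
  simp only [layeredTensor]
  rw [sum_ite, sum_const_zero, add_zero, sum_const, nsmul_eq_mul, mul_one_div,
    div_le_iff₀ (by positivity)]
  exact_mod_cast card_filter_cons_injective_image_mem_le F v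

end ConsEnumeration

theorem layered_tensor_eigenvalue_bound_general (n m : ℕ)
    (E : Finset (Finset (Fin n)))
    (Ehat : Finset (Finset (Fin n ⊕ Fin m)))
    (hEhat : Ehat = E.image (fun e =>
      e.image Sum.inl ∪
        (Finset.univ.filter (fun i : Fin m => e.card ≤ i.1 + 1)).image Sum.inr))
    (a : (Fin (m + 1) → Fin n ⊕ Fin m) → ℝ)
    (ha : ∀ i, a i =
      if Function.Injective i ∧ Finset.image i Finset.univ ∈ Ehat
      then 1 / (Nat.factorial m : ℝ) else 0)
    (Δ Δstar : ℕ)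
    (hΔ : Δ = Finset.univ.sup (fun v : Fin n => (E.filter (fun e => v ∈ e)).card))
    (hΔstar : Δstar = Finset.univ.sup
      (fun i : Fin m => (Ehat.filter (fun e => Sum.inr i ∈ e)).card))
    (lam : ℂ) (x : Fin n ⊕ Fin m → ℂ) (hx : x ≠ 0)
    (heig : ∀ v : Fin n ⊕ Fin m,
      ∑ g : Fin m → Fin n ⊕ Fin m, (a (Fin.cons v g) : ℂ) * ∏ j, x (g j) =
        lam * (x v) ^ m) :
    ‖lam‖ ≤ max (Δ : ℝ) (Δstar : ℝ) := by
  obtain rfl : a = layeredTensor Ehat m := funext ha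
  have hdeg : ∀ v, (#{e ∈ Ehat | v ∈ e} : ℝ) ≤ max (Δ : ℝ) (Δstar : ℝ) := by
    rintro (w | i)
    · have hinl : #{e ∈ Ehat | Sum.inl w ∈ e} ≤ #{e ∈ E | w ∈ e} := by
        rw [hEhat]
        exact card_filter_mem_image_le fun e h => by simpa using h
      have hw : #{e ∈ E | w ∈ e} ≤ Δ :=
        hΔ ▸ le_sup (f := fun w => #{e ∈ E | w ∈ e}) (mem_univ w)
      exact le_max_of_le_left (by exact_mod_cast hinl.trans hw)
    · have hi : #{e ∈ Ehat | Sum.inr i ∈ e} ≤ Δstar :=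
        hΔstar ▸ le_sup (f := fun i => #{e ∈ Ehat | Sum.inr i ∈ e}) (mem_univ i)
      exact le_max_of_le_right (by exact_mod_cast hi)
  exact norm_le_of_eigen_of_sum_cons_le (layeredTensor_nonneg Ehat m)
    (fun v => (sum_layeredTensor_cons_le_card_filter_mem Ehat v).trans (hdeg v)) hx heig

/-- Every eigenvalue `λ` (in the sense of Qi) of the layered e-adjacency tensor of a
hypergraph `H` with no repeated hyperedge satisfies `|λ| ≤ max (Δ, Δ*)`, where `Δ` is
the maximum degree over the original vertices and `Δ*` the maximum degree over the
special vertices of the uniformised hypergraph. -/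
theorem layered_tensor_eigenvalue_bound (n m : ℕ) (hm : 1 ≤ m)
    (E : Finset (Finset (Fin n)))
    (hne : ∀ e ∈ E, 1 ≤ e.card) (hrange : ∀ e ∈ E, e.card ≤ m + 1)
    (Ehat : Finset (Finset (Fin n ⊕ Fin m)))
    (hEhat : Ehat = E.image (fun e =>
      e.image Sum.inl ∪
        (Finset.univ.filter (fun i : Fin m => e.card ≤ i.1 + 1)).image Sum.inr))
    (a : (Fin (m + 1) → Fin n ⊕ Fin m) → ℝ)
    (ha : ∀ i, a i =
      if Function.Injective i ∧ Finset.image i Finset.univ ∈ Ehat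
      then 1 / (Nat.factorial m : ℝ) else 0)
    (Δ Δstar : ℕ)
    (hΔ : Δ = Finset.univ.sup (fun v : Fin n => (E.filter (fun e => v ∈ e)).card))
    (hΔstar : Δstar = Finset.univ.sup
      (fun i : Fin m => (Ehat.filter (fun e => Sum.inr i ∈ e)).card))
    (lam : ℂ) (x : Fin n ⊕ Fin m → ℂ) (hx : x ≠ 0)
    (heig : ∀ v : Fin n ⊕ Fin m,
      ∑ g : Fin m → Fin n ⊕ Fin m, (a (Fin.cons v g) : ℂ) * ∏ j, x (g j) =
        lam * (x v) ^ m) :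
    ‖lam‖ ≤ max (Δ : ℝ) (Δstar : ℝ) :=
  layered_tensor_eigenvalue_bound_general n m E Ehat hEhat a ha Δ Δstar hΔ hΔstar lam x hx heig
end
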